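/- Let ρ₁, ρ₂ be finite positive Borel measures on the circle Λ with ρ₁(Λ) ≤ ρ₂(Λ). Then the flux function J is right-continuous: for every v ∈ Λ, J(v+ε) → J(v) as ε ↓ 0. -/

import Mathlib

open MeasureTheory Set Filter Topology

noncomputable section

instance fact01 : Fact ((0:ℝ) < 1) := ⟨zero_lt_one⟩

/-- The circle `ℝ/ℤ`. -/
abbrev Circle' : Type := AddCircle (1:ℝ)

/-- The angular position of `w` in the arc starting at `u`, measured positively;
a real number in `[0,1)`. -/
noncomputable def theta (u w : Circle') : ℝ := ((AddCircle.equivIco 1 0) (w - u) : ℝ)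

/-- The closed arc `[u,v]` from `u` to `v` in the positive direction. -/
def arcCC (u v : Circle') : Set Circle' := {w | theta u w ≤ theta u v}

/-- The half-open arc `(u,v]`. -/
def arcOC (u v : Circle') : Set Circle' := {w | 0 < theta u w ∧ theta u w ≤ theta u v}

/-- The half-open arc `[u,v)`. -/
def arcCO (u v : Circle') : Set Circle' := {w | theta u w < theta u v}

/-- The open arc `(u,v)`. -/
def arcOO (u v : Circle') : Set Circle' := {w | 0 < theta u w ∧ theta u w < theta u v}

/-- The excess `E(u,v) = ρ₁([u,v]) - ρ₂([u,v])`. -/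
noncomputable def excess (ρ₁ ρ₂ : Measure Circle') (u v : Circle') : ℝ :=
  (ρ₁ (arcCC u v)).toReal - (ρ₂ (arcCC u v)).toReal

/-- The flux `J(v) = sup_u max (E(u,v)) 0`. -/
noncomputable def flux (ρ₁ ρ₂ : Measure Circle') (v : Circle') : ℝ :=
  ⨆ u : Circle', max (excess ρ₁ ρ₂ u v) 0

/-- The set `𝒥 = {v | ∃ u, E(u,v) > 0}`. -/
def Jset (ρ₁ ρ₂ : Measure Circle') : Set Circle' := {v | ∃ u : Circle', 0 < excess ρ₁ ρ₂ u v}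

/-! Measure arcs in the coordinate `theta v`, so that `S = (v, v + ε]` is `theta v ⁻¹' Ioc 0 ε`.
For `u ∉ S` the arc `[u, v + ε]` is the disjoint union `[u, v] ∪ S`, hence
`E(u, v + ε) = E(u, v) + ρ₁ S - ρ₂ S`. For `u ∈ S` the arc `[u, v + ε]` lies in `S`, so
`E(u, v + ε) ≤ ρ₁ S`; and the complement of `[u, v]` lies in `S`, so `ρ₁ Λ ≤ ρ₂ Λ` gives
`E(u, v) ≤ ρ₂ S`. Taking suprema, `|J(v + ε) - J(v)| ≤ ρ₁ S + ρ₂ S`, which tends to `0` as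
`ε ↓ 0` by continuity of finite measures along the decreasing sets `S`, whose intersection
is empty. -/

lemma theta_add_coe (u : Circle') (x : ℝ) : theta u (u + (x : Circle')) = Int.fract x := by
  rw [theta, add_sub_cancel_left]
  simp [AddCircle.coe_equivIco_mk_apply]

lemma theta_mem_Ico (u w : Circle') : theta u w ∈ Ico (0:ℝ) 1 := by
  simpa [theta] using (AddCircle.equivIco 1 0 (w - u)).2

lemma add_coe_theta (u w : Circle') : u + ((theta u w : ℝ) : Circle') = w := by
  have : ((theta u w : ℝ) : Circle') = w - u := (AddCircle.equivIco 1 0).symm_apply_apply (w - u)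
  rw [this, add_sub_cancel]

lemma theta_self (v : Circle') : theta v v = 0 := by
  simpa using theta_add_coe v 0

lemma theta_add_coe_of_mem_Ico (v : Circle') {ε : ℝ} (hε : ε ∈ Ico (0:ℝ) 1) :
    theta v (v + (ε : Circle')) = ε := by
  rw [theta_add_coe, Int.fract_eq_self.2 hε]

lemma theta_eq_fract_sub (v u w : Circle') : theta u w = Int.fract (theta v w - theta v u) := by
  conv_lhs => rw [← add_coe_theta v u, ← add_coe_theta v w]
  rw [← theta_add_coe (v + (theta v u : Circle')), AddCircle.coe_sub]
  congr 1
  abel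

lemma measurable_theta (u : Circle') : Measurable (theta u) :=
  measurable_subtype_coe.comp
    ((AddCircle.measurableEquivIco (1:ℝ) 0).measurable.comp (measurable_id.sub_const u))

lemma Int.fract_sub_eq_ite {a b : ℝ} (ha : a ∈ Ico (0:ℝ) 1) (hb : b ∈ Ico (0:ℝ) 1) :
    Int.fract (b - a) = if a ≤ b then b - a else b - a + 1 := by
  split_ifs with h
  · exact Int.fract_eq_self.2 ⟨by linarith, by linarith [ha.1, hb.2]⟩
  · rw [← Int.fract_add_one,
      Int.fract_eq_self.2 ⟨by linarith [ha.2, hb.1], by linarith [ha.1, hb.2]⟩]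

lemma Int.fract_sub_le_fract_sub_iff {t s x : ℝ} (ht : t ∈ Ico (0:ℝ) 1) (hs : s ∈ Ico (0:ℝ) 1)
    (hx : x ∈ Ico (0:ℝ) 1) :
    Int.fract (s - t) ≤ Int.fract (x - t) ↔ if t ≤ x then t ≤ s ∧ s ≤ x else t ≤ s ∨ s ≤ x := by
  rw [Int.fract_sub_eq_ite ht hs, Int.fract_sub_eq_ite ht hx]
  grind

lemma mem_arcCC_iff (v u x w : Circle') :
    w ∈ arcCC u x ↔ if theta v u ≤ theta v x then theta v u ≤ theta v w ∧ theta v w ≤ theta v x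
      else theta v u ≤ theta v w ∨ theta v w ≤ theta v x := by
  rw [arcCC, mem_ofPred_eq, theta_eq_fract_sub v u w, theta_eq_fract_sub v u x]
  exact Int.fract_sub_le_fract_sub_iff (theta_mem_Ico v u) (theta_mem_Ico v w) (theta_mem_Ico v x)

section Arcs

variable {v u : Circle'} {ε : ℝ}

lemma arcCC_add_coe_eq_union (hε : ε ∈ Ico (0:ℝ) 1) (hu : u ∉ theta v ⁻¹' Ioc 0 ε) :
    arcCC u (v + (ε : Circle')) = arcCC u v ∪ theta v ⁻¹' Ioc 0 ε := by
  ext w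
  have := theta_mem_Ico v u
  have := theta_mem_Ico v w
  simp only [mem_union, mem_preimage, mem_Ioc, mem_arcCC_iff v, theta_self,
    theta_add_coe_of_mem_Ico v hε] at hu ⊢
  grind

lemma disjoint_arcCC_preimage_Ioc (hu : u ∉ theta v ⁻¹' Ioc 0 ε) :
    Disjoint (arcCC u v) (theta v ⁻¹' Ioc 0 ε) := by
  refine Set.disjoint_left.2 fun w hw hw' => ?_
  have := theta_mem_Ico v u
  simp only [mem_preimage, mem_Ioc, mem_arcCC_iff v, theta_self] at hu hw hw'
  grind

lemma arcCC_add_coe_subset (hε : ε ∈ Ico (0:ℝ) 1) (hu : u ∈ theta v ⁻¹' Ioc 0 ε) :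
    arcCC u (v + (ε : Circle')) ⊆ theta v ⁻¹' Ioc 0 ε := by
  intro w hw
  have := theta_mem_Ico v w
  simp only [mem_preimage, mem_Ioc, mem_arcCC_iff v, theta_add_coe_of_mem_Ico v hε] at hu hw ⊢
  grind

lemma compl_arcCC_subset (hu : u ∈ theta v ⁻¹' Ioc 0 ε) :
    (arcCC u v)ᶜ ⊆ theta v ⁻¹' Ioc 0 ε := by
  intro w hw
  have := theta_mem_Ico v w
  simp only [mem_compl_iff, mem_preimage, mem_Ioc, mem_arcCC_iff v, theta_self] at hu hw ⊢
  grind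

end Arcs

section Excess

variable (ρ₁ ρ₂ : Measure Circle') {v u : Circle'} {ε : ℝ}

lemma excess_eq_measureReal (u v : Circle') :
    excess ρ₁ ρ₂ u v = ρ₁.real (arcCC u v) - ρ₂.real (arcCC u v) := rfl

lemma measurableSet_arcCC (u v : Circle') : MeasurableSet (arcCC u v) :=
  measurable_theta u measurableSet_Iic

lemma excess_add_coe_of_notMem [IsFiniteMeasure ρ₁] [IsFiniteMeasure ρ₂] (hε : ε ∈ Ico (0:ℝ) 1)
    (hu : u ∉ theta v ⁻¹' Ioc 0 ε) :
    excess ρ₁ ρ₂ u (v + (ε : Circle')) =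
      excess ρ₁ ρ₂ u v + (ρ₁.real (theta v ⁻¹' Ioc 0 ε) - ρ₂.real (theta v ⁻¹' Ioc 0 ε)) := by
  have hS : MeasurableSet (theta v ⁻¹' Ioc 0 ε) := measurable_theta v measurableSet_Ioc
  simp only [excess_eq_measureReal, arcCC_add_coe_eq_union hε hu,
    measureReal_union (μ := ρ₁) (disjoint_arcCC_preimage_Ioc hu) hS,
    measureReal_union (μ := ρ₂) (disjoint_arcCC_preimage_Ioc hu) hS]
  ring

lemma excess_add_coe_le_of_mem [IsFiniteMeasure ρ₁] (hε : ε ∈ Ico (0:ℝ) 1)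
    (hu : u ∈ theta v ⁻¹' Ioc 0 ε) :
    excess ρ₁ ρ₂ u (v + (ε : Circle')) ≤ ρ₁.real (theta v ⁻¹' Ioc 0 ε) := by
  rw [excess_eq_measureReal]
  linarith [measureReal_mono (μ := ρ₁) (arcCC_add_coe_subset hε hu),
    measureReal_nonneg (μ := ρ₂) (s := arcCC u (v + (ε : Circle')))]

lemma excess_le_of_mem [IsFiniteMeasure ρ₁] [IsFiniteMeasure ρ₂]
    (hmass : ρ₁ univ ≤ ρ₂ univ) (hu : u ∈ theta v ⁻¹' Ioc 0 ε) :
    excess ρ₁ ρ₂ u v ≤ ρ₂.real (theta v ⁻¹' Ioc 0 ε) := by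
  have h₁ : ρ₁.real (arcCC u v) ≤ ρ₂.real univ :=
    (measureReal_mono (subset_univ _)).trans (ENNReal.toReal_mono (measure_ne_top _ _) hmass)
  have h₂ := measureReal_add_measureReal_compl (μ := ρ₂) (measurableSet_arcCC u v)
  linarith [excess_eq_measureReal ρ₁ ρ₂ u v, measureReal_mono (μ := ρ₂) (compl_arcCC_subset hu)]

end Excess

section Flux

variable (ρ₁ ρ₂ : Measure Circle') [IsFiniteMeasure ρ₁]

lemma bddAbove_range_max_excess (v : Circle') :
    BddAbove (range fun u => max (excess ρ₁ ρ₂ u v) 0) := by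
  refine ⟨max (ρ₁.real univ) 0, forall_mem_range.2 fun u => max_le_max_right _ ?_⟩
  rw [excess_eq_measureReal]
  linarith [measureReal_mono (μ := ρ₁) (subset_univ (arcCC u v)),
    measureReal_nonneg (μ := ρ₂) (s := arcCC u v)]

lemma excess_le_flux (u v : Circle') : excess ρ₁ ρ₂ u v ≤ flux ρ₁ ρ₂ v :=
  (le_max_left _ _).trans (le_ciSup (bddAbove_range_max_excess ρ₁ ρ₂ v) u)

lemma flux_nonneg (v : Circle') : 0 ≤ flux ρ₁ ρ₂ v :=
  (le_max_right _ _).trans (le_ciSup (bddAbove_range_max_excess ρ₁ ρ₂ v) v)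

omit [IsFiniteMeasure ρ₁] in
lemma flux_le {v : Circle'} {c : ℝ} (h : ∀ u, excess ρ₁ ρ₂ u v ≤ c) (hc : 0 ≤ c) :
    flux ρ₁ ρ₂ v ≤ c :=
  Real.iSup_le (fun u => max_le (h u) hc) hc

variable [IsFiniteMeasure ρ₂]

lemma abs_flux_add_coe_sub_flux_le (hmass : ρ₁ univ ≤ ρ₂ univ) (v : Circle') {ε : ℝ}
    (hε : ε ∈ Ico (0:ℝ) 1) :
    |flux ρ₁ ρ₂ (v + (ε : Circle')) - flux ρ₁ ρ₂ v| ≤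
      ρ₁.real (theta v ⁻¹' Ioc 0 ε) + ρ₂.real (theta v ⁻¹' Ioc 0 ε) := by
  have h₁ := measureReal_nonneg (μ := ρ₁) (s := theta v ⁻¹' Ioc 0 ε)
  have h₂ := measureReal_nonneg (μ := ρ₂) (s := theta v ⁻¹' Ioc 0 ε)
  rw [abs_sub_le_iff]
  constructor
  · rw [sub_le_iff_le_add']
    refine flux_le ρ₁ ρ₂ (fun u => ?_) (by linarith [flux_nonneg ρ₁ ρ₂ v])
    by_cases hu : u ∈ theta v ⁻¹' Ioc 0 ε
    · linarith [excess_add_coe_le_of_mem ρ₁ ρ₂ hε hu, flux_nonneg ρ₁ ρ₂ v]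
    · linarith [excess_add_coe_of_notMem ρ₁ ρ₂ hε hu, excess_le_flux ρ₁ ρ₂ u v]
  · rw [sub_le_iff_le_add']
    refine flux_le ρ₁ ρ₂ (fun u => ?_) (by linarith [flux_nonneg ρ₁ ρ₂ (v + (ε : Circle'))])
    by_cases hu : u ∈ theta v ⁻¹' Ioc 0 ε
    · linarith [excess_le_of_mem ρ₁ ρ₂ hmass hu, flux_nonneg ρ₁ ρ₂ (v + (ε : Circle'))]
    · linarith [excess_add_coe_of_notMem ρ₁ ρ₂ hε hu,
        excess_le_flux ρ₁ ρ₂ u (v + (ε : Circle'))]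

end Flux

lemma MeasureTheory.tendsto_measureReal_preimage_Ioc_nhdsGT {α : Type*} [MeasurableSpace α]
    (μ : Measure α) [IsFiniteMeasure μ] {f : α → ℝ} (hf : Measurable f) (a : ℝ) :
    Tendsto (fun ε => μ.real (f ⁻¹' Ioc a ε)) (𝓝[>] a) (𝓝 0) := by
  have hempty : ⋂ r > a, f ⁻¹' Ioc a r = ∅ := by
    refine eq_empty_of_forall_notMem fun x hx => ?_
    simp only [mem_iInter, mem_preimage, mem_Ioc] at hx
    obtain ⟨ha, -⟩ := hx (a + 1) (by linarith)
    linarith [(hx ((a + f x) / 2) (by linarith)).2]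
  have := tendsto_measure_biInter_gt (μ := μ) (s := fun r => f ⁻¹' Ioc a r) (a := a)
    (fun r _ => (hf measurableSet_Ioc).nullMeasurableSet)
    (fun i j _ hij => preimage_mono (Ioc_subset_Ioc_right hij))
    ⟨a + 1, by linarith, measure_ne_top _ _⟩
  rw [hempty, measure_empty] at this
  exact (ENNReal.tendsto_toReal ENNReal.zero_ne_top).comp this

/-- the flux `J` is right-continuous: `J(v+ε) → J(v)` as `ε ↓ 0`. -/
theorem stmt4 (ρ₁ ρ₂ : Measure Circle') [IsFiniteMeasure ρ₁] [IsFiniteMeasure ρ₂]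
    (hmass : ρ₁ Set.univ ≤ ρ₂ Set.univ) (v : Circle') :
    Filter.Tendsto (fun ε : ℝ => flux ρ₁ ρ₂ (v + (ε : Circle')))
      (nhdsWithin 0 (Set.Ioi 0)) (nhds (flux ρ₁ ρ₂ v)) := by
  have hsmall : Tendsto (fun ε => ρ₁.real (theta v ⁻¹' Ioc 0 ε) + ρ₂.real (theta v ⁻¹' Ioc 0 ε))
      (𝓝[>] 0) (𝓝 0) := by
    simpa using (tendsto_measureReal_preimage_Ioc_nhdsGT ρ₁ (measurable_theta v) 0).add
      (tendsto_measureReal_preimage_Ioc_nhdsGT ρ₂ (measurable_theta v) 0)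
  rw [tendsto_iff_norm_sub_tendsto_zero]
  refine squeeze_zero' (Eventually.of_forall fun ε => norm_nonneg _) ?_ hsmall
  filter_upwards [Ioo_mem_nhdsGT (zero_lt_one' ℝ)] with ε hε
  exact abs_flux_add_coe_sub_flux_le ρ₁ ρ₂ hmass v (Ioo_subset_Ico_self hε)

end
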